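/- arXiv:2002.08045 — 2 statements merged into one kernel-verified Lean document; each statement's English description precedes it below -/
import Mathlib

section
/- Let 0 < α < n, γ ∈ ℝ with n + γ > 0, and f ∈ L^1(Q_p^n). Then the p-adic fractional Hardy operator satisfies the weak-type estimate ‖H^p_α f‖_{L^{(n+γ)/(n−α),∞}(|x|_p^γ; Q_p^n)} ≤ C ‖f‖_{L^1(Q_p^n)}, where C = ((1 − p^{−n})/(1 − p^{−(n+γ)}))^{(n−α)/(n+γ)}. -/
open MeasureTheory Metric Set
open scoped ENNReal NNReal

noncomputable instance (p : ℕ) [Fact p.Prime] : MeasurableSpace ℚ_[p] := borel _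
instance (p : ℕ) [Fact p.Prime] : BorelSpace ℚ_[p] := ⟨rfl⟩

/-- The closed unit ball of `ℚ_[p]^n` (with the sup norm) as a positive compact set. -/
noncomputable def unitBall (p : ℕ) [Fact p.Prime] (n : ℕ) :
    TopologicalSpace.PositiveCompacts (Fin n → ℚ_[p]) :=
  ⟨⟨closedBall 0 1, isCompact_closedBall 0 1⟩,
    ⟨0, ball_subset_interior_closedBall (mem_ball_self one_pos)⟩⟩

/-- The Haar measure on `ℚ_[p]^n`, normalized so that the unit ball has measure `1`. -/
noncomputable def μp (p : ℕ) [Fact p.Prime] (n : ℕ) : Measure (Fin n → ℚ_[p]) :=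
  Measure.addHaarMeasure (unitBall p n)

/-- The `p`-adic fractional Hardy operator
`H^p_α f(x) = |x|_p^{-(n-α)} ∫_{|y|_p ≤ |x|_p} f(y) dy` (real powers). -/
noncomputable def Hop (p : ℕ) [Fact p.Prime] (n : ℕ) (α : ℝ)
    (f : (Fin n → ℚ_[p]) → ℝ) (x : Fin n → ℚ_[p]) : ℝ :=
  ‖x‖ ^ (α - (n : ℝ)) * ∫ y in {y : Fin n → ℚ_[p] | ‖y‖ ≤ ‖x‖}, f y ∂(μp p n)

/-- The indicator function of the unit ball of `ℚ_[p]^n`. -/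
noncomputable def f₀ (p : ℕ) [Fact p.Prime] (n : ℕ) : (Fin n → ℚ_[p]) → ℝ :=
  Set.indicator {y : Fin n → ℚ_[p] | ‖y‖ ≤ 1} (fun _ => (1 : ℝ))

/-- The `p`-adic central Morrey norm `‖f‖_{Ḃ^{q,l}}`. -/
noncomputable def morrey (p : ℕ) [Fact p.Prime] (n : ℕ) (q l : ℝ)
    (f : (Fin n → ℚ_[p]) → ℝ) : ℝ≥0∞ :=
  ⨆ γ : ℤ, (ENNReal.ofReal (((p : ℝ) ^ ((n : ℝ) * (γ : ℝ))) ^ (-(1 + l * q))) *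
    ∫⁻ x in {x : Fin n → ℚ_[p] | ‖x‖ ≤ (p : ℝ) ^ γ},
      ENNReal.ofReal (|f x| ^ q) ∂(μp p n)) ^ (1 / q)

/-- The weak `p`-adic central Morrey norm `‖g‖_{WḂ^{q,l}}`. -/
noncomputable def wmorrey (p : ℕ) [Fact p.Prime] (n : ℕ) (q l : ℝ)
    (g : (Fin n → ℚ_[p]) → ℝ) : ℝ≥0∞ :=
  ⨆ γ : ℤ, ENNReal.ofReal (((p : ℝ) ^ ((n : ℝ) * (γ : ℝ))) ^ (-(l + 1 / q))) *
    ⨆ (t : ℝ) (_ : 0 < t), ENNReal.ofReal t *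
      (μp p n {x : Fin n → ℚ_[p] | ‖x‖ ≤ (p : ℝ) ^ γ ∧ t < |g x|}) ^ (1 / q)

lemma padic_exists_repr (p : ℕ) [hp : Fact p.Prime] (k : ℤ) (z : ℚ_[p])
    (hz : ‖z‖ ≤ (p:ℝ) ^ (k+1)) :
    ∃ a : Fin p, ‖z - (a:ℚ_[p]) * (p:ℚ_[p]) ^ (-(k+1))‖ ≤ (p:ℝ) ^ k := by
  have hp1 : (1:ℝ) < p := Nat.one_lt_cast.mpr hp.out.one_lt
  have hp0 : (0:ℝ) < p := lt_trans one_pos hp1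
  have hpq : ((p:ℚ_[p])) ≠ 0 := by exact_mod_cast hp.out.ne_zero
  set w : ℚ_[p] := z * (p:ℚ_[p]) ^ (k+1) with hw
  have hnw : ‖w‖ ≤ 1 := by
    rw [hw, norm_mul, norm_zpow, Padic.norm_p]
    calc ‖z‖ * ((p:ℝ)⁻¹) ^ (k+1) ≤ (p:ℝ)^(k+1) * ((p:ℝ)⁻¹)^(k+1) := by
          apply mul_le_mul_of_nonneg_right hz (zpow_nonneg (by positivity) _)
      _ = 1 := by rw [← mul_zpow]; simp [mul_inv_cancel₀ hp0.ne']
  set W : ℤ_[p] := ⟨w, hnw⟩ with hW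
  have ha_lt : W.appr 1 < p := by simpa using W.appr_lt 1
  refine ⟨⟨W.appr 1, ha_lt⟩, ?_⟩
  have hdvd : ‖W - (W.appr 1 : ℤ_[p])‖ ≤ (p:ℝ) ^ (-(1:ℕ) : ℤ) := by
    rw [PadicInt.norm_le_pow_iff_mem_span_pow]
    simpa using W.appr_spec 1
  have hcoe : ‖w - (W.appr 1 : ℚ_[p])‖ ≤ (p:ℝ)⁻¹ := by
    have : ((W - (W.appr 1 : ℤ_[p]) : ℤ_[p]) : ℚ_[p]) = w - (W.appr 1 : ℚ_[p]) := by
      rfl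
    rw [← this, ← PadicInt.norm_def]
    simpa using hdvd
  have hz' : z - ((⟨W.appr 1, ha_lt⟩ : Fin p) : ℚ_[p]) * (p:ℚ_[p]) ^ (-(k+1))
      = (w - (W.appr 1 : ℚ_[p])) * (p:ℚ_[p]) ^ (-(k+1)) := by
    rw [hw, sub_mul, mul_assoc, ← zpow_add₀ hpq, add_neg_cancel, zpow_zero, mul_one]
  rw [hz', norm_mul, norm_zpow, Padic.norm_p]
  calc ‖w - (W.appr 1 : ℚ_[p])‖ * ((p:ℝ)⁻¹) ^ (-(k+1))
      ≤ (p:ℝ)⁻¹ * ((p:ℝ)⁻¹) ^ (-(k+1)) := by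
        apply mul_le_mul_of_nonneg_right hcoe (zpow_nonneg (by positivity) _)
    _ = (p:ℝ) ^ k := by
        rw [inv_zpow, ← zpow_neg, neg_neg]
        rw [← zpow_neg_one, ← zpow_add₀ hp0.ne']
        ring_nf

lemma padic_repr_sub_norm (p : ℕ) [hp : Fact p.Prime] (k : ℤ) (a b : Fin p) (h : a ≠ b) :
    ‖((a:ℚ_[p]) - (b:ℚ_[p])) * (p:ℚ_[p]) ^ (-(k+1))‖ = (p:ℝ) ^ (k+1) := by
  have hp1 : (1:ℝ) < p := Nat.one_lt_cast.mpr hp.out.one_lt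
  have h1 : ((a:ℚ_[p]) - (b:ℚ_[p])) = (((a:ℤ) - (b:ℤ) : ℤ) : ℚ_[p]) := by push_cast; ring
  have hne : ((a:ℤ) - (b:ℤ)) ≠ 0 := by
    simp only [sub_ne_zero]
    exact_mod_cast fun hh => h (Fin.ext (by exact_mod_cast hh))
  have hnd : ¬ ((p:ℤ) ∣ ((a:ℤ) - (b:ℤ))) := by
    intro hd
    have ha := a.isLt
    have hb := b.isLt
    have h2 : |(a:ℤ) - (b:ℤ)| < p := by
      rw [abs_sub_lt_iff]; omega
    have := Int.le_of_dvd (abs_pos.mpr hne) ((dvd_abs _ _).mpr hd)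
    omega
  have hnorm1 : ‖(((a:ℤ) - (b:ℤ) : ℤ) : ℚ_[p])‖ = 1 := by
    refine le_antisymm (Padic.norm_int_le_one _) ?_
    by_contra hlt
    push_neg at hlt
    exact hnd (Padic.norm_intCast_lt_one_iff.mp hlt)
  rw [h1, norm_mul, hnorm1, one_mul, norm_zpow, Padic.norm_p, inv_zpow, ← zpow_neg,
    neg_neg]




lemma padic_cast_norm_le_one (p : ℕ) [hp : Fact p.Prime] (a : Fin p) :
    ‖(a : ℚ_[p])‖ ≤ 1 := by
  have : ((a : ℚ_[p])) = (((a:ℕ) : ℤ) : ℚ_[p]) := by push_cast; ring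
  rw [this]; exact Padic.norm_int_le_one _

/-- center of a coset -/
noncomputable def cenv (p : ℕ) [Fact p.Prime] (n : ℕ) (k : ℤ) (v : Fin n → Fin p) :
    Fin n → ℚ_[p] := fun i => (v i : ℚ_[p]) * (p:ℚ_[p]) ^ (-(k+1))

lemma ball_decomp (p : ℕ) [hp : Fact p.Prime] (n : ℕ) (k : ℤ) :
    closedBall (0 : Fin n → ℚ_[p]) ((p:ℝ) ^ (k+1)) =
      ⋃ v : Fin n → Fin p, closedBall (cenv p n k v) ((p:ℝ) ^ k) := by
  have hp1 : (1:ℝ) < p := Nat.one_lt_cast.mpr hp.out.one_lt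
  have hk : (0:ℝ) ≤ (p:ℝ) ^ k := zpow_nonneg (by positivity) _
  have hk1 : (0:ℝ) ≤ (p:ℝ) ^ (k+1) := zpow_nonneg (by positivity) _
  have hkk : ((p:ℝ))^k ≤ (p:ℝ)^(k+1) := zpow_le_zpow_right₀ hp1.le (by omega)
  ext x
  simp only [mem_closedBall, dist_eq_norm, sub_zero, mem_iUnion]
  constructor
  · intro hx
    have hxi : ∀ i, ‖x i‖ ≤ (p:ℝ)^(k+1) := fun i =>
      le_trans (norm_le_pi_norm x i) hx
    choose v hv using fun i => padic_exists_repr p k (x i) (hxi i)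
    refine ⟨v, ?_⟩
    rw [pi_norm_le_iff_of_nonneg hk]
    intro i
    simpa [cenv] using hv i
  · rintro ⟨v, hv⟩
    rw [pi_norm_le_iff_of_nonneg hk1]
    intro i
    have h1 : ‖x i - cenv p n k v i‖ ≤ (p:ℝ)^k := by
      simpa using le_trans (norm_le_pi_norm (x - cenv p n k v) i) hv
    have h2 : ‖cenv p n k v i‖ ≤ (p:ℝ)^(k+1) := by
      rw [cenv, norm_mul, norm_zpow, Padic.norm_p, inv_zpow, ← zpow_neg, neg_neg]
      calc ‖((v i : ℚ_[p]))‖ * (p:ℝ)^(k+1) ≤ 1 * (p:ℝ)^(k+1) :=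
            mul_le_mul_of_nonneg_right (padic_cast_norm_le_one p (v i)) hk1
        _ = (p:ℝ)^(k+1) := one_mul _
    calc ‖x i‖ = ‖(x i - cenv p n k v i) + cenv p n k v i‖ := by ring_nf
      _ ≤ max ‖x i - cenv p n k v i‖ ‖cenv p n k v i‖ := Padic.nonarchimedean _ _
      _ ≤ (p:ℝ)^(k+1) := max_le (le_trans h1 hkk) h2

lemma ball_disjoint (p : ℕ) [hp : Fact p.Prime] (n : ℕ) (k : ℤ) :
    Pairwise (Function.onFun Disjoint
      (fun v : Fin n → Fin p => closedBall (cenv p n k v) ((p:ℝ) ^ k))) := by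
  have hp1 : (1:ℝ) < p := Nat.one_lt_cast.mpr hp.out.one_lt
  intro v w hvw
  rw [Function.onFun, Set.disjoint_left]
  intro x hxv hxw
  obtain ⟨i, hi⟩ : ∃ i, v i ≠ w i := by
    by_contra hc; push_neg at hc; exact hvw (funext hc)
  rw [mem_closedBall, dist_eq_norm] at hxv hxw
  have h1 : ‖x i - cenv p n k v i‖ ≤ (p:ℝ)^k := by
    simpa using le_trans (norm_le_pi_norm (x - cenv p n k v) i) hxv
  have h2 : ‖x i - cenv p n k w i‖ ≤ (p:ℝ)^k := by
    simpa using le_trans (norm_le_pi_norm (x - cenv p n k w) i) hxw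
  have heq : cenv p n k v i - cenv p n k w i
      = ((v i : ℚ_[p]) - (w i : ℚ_[p])) * (p:ℚ_[p]) ^ (-(k+1)) := by
    rw [cenv, cenv]; ring
  have h3 : ‖cenv p n k v i - cenv p n k w i‖ = (p:ℝ)^(k+1) := by
    rw [heq]; exact padic_repr_sub_norm p k (v i) (w i) hi
  have h4 : ‖cenv p n k v i - cenv p n k w i‖ ≤ (p:ℝ)^k := by
    have : cenv p n k v i - cenv p n k w i
        = (cenv p n k v i - x i) + (x i - cenv p n k w i) := by ring
    rw [this]
    refine le_trans (Padic.nonarchimedean _ _) (max_le ?_ h2)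
    rwa [norm_sub_rev]
  rw [h3] at h4
  have : ((p:ℝ))^k < (p:ℝ)^(k+1) := zpow_lt_zpow_right₀ hp1 (by omega)
  linarith

instance μp_haar (p : ℕ) [Fact p.Prime] (n : ℕ) : (μp p n).IsAddHaarMeasure :=
  Measure.isAddHaarMeasure_addHaarMeasure _

lemma meas_unit (p : ℕ) [hp : Fact p.Prime] (n : ℕ) :
    μp p n (closedBall (0 : Fin n → ℚ_[p]) 1) = 1 :=
  Measure.addHaarMeasure_self (K₀ := unitBall p n)

lemma meas_translate (p : ℕ) [hp : Fact p.Prime] (n : ℕ) (c : Fin n → ℚ_[p]) (r : ℝ) :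
    μp p n (closedBall c r) = μp p n (closedBall 0 r) := by
  have : closedBall c r = (fun x => x + (-c)) ⁻¹' closedBall (0 : Fin n → ℚ_[p]) r := by
    ext x
    simp [mem_closedBall, dist_eq_norm, sub_eq_add_neg]
  rw [this, measure_preimage_add_right]

lemma meas_ball_succ (p : ℕ) [hp : Fact p.Prime] (n : ℕ) (k : ℤ) :
    μp p n (closedBall (0 : Fin n → ℚ_[p]) ((p:ℝ) ^ (k+1)))
      = (p:ℝ≥0∞) ^ n * μp p n (closedBall (0 : Fin n → ℚ_[p]) ((p:ℝ) ^ k)) := by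
  rw [ball_decomp p n k,
    measure_iUnion (ball_disjoint p n k) (fun v => measurableSet_closedBall)]
  have : ∀ v : Fin n → Fin p,
      μp p n (closedBall (cenv p n k v) ((p:ℝ)^k))
        = μp p n (closedBall (0 : Fin n → ℚ_[p]) ((p:ℝ)^k)) :=
    fun v => meas_translate p n _ _
  simp_rw [this]
  rw [tsum_eq_sum (s := Finset.univ) (by simp), Finset.sum_const, Finset.card_univ]
  simp [Fintype.card_fun, mul_comm]

lemma pn_ne_zero (p : ℕ) [hp : Fact p.Prime] (n : ℕ) : ((p:ℝ≥0∞)) ^ n ≠ 0 := by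
  have : (p:ℝ≥0∞) ≠ 0 := by exact_mod_cast hp.out.ne_zero
  positivity

lemma pn_ne_top (p : ℕ) [hp : Fact p.Prime] (n : ℕ) : ((p:ℝ≥0∞)) ^ n ≠ ⊤ := by
  exact_mod_cast ENNReal.pow_ne_top (ENNReal.natCast_ne_top p)

lemma pn_ofReal (p : ℕ) [hp : Fact p.Prime] (n : ℕ) :
    ((p:ℝ≥0∞)) ^ n = ENNReal.ofReal ((p:ℝ) ^ (n:ℤ)) := by
  rw [zpow_natCast, ← ENNReal.ofReal_natCast p, ← ENNReal.ofReal_pow (by positivity)]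

lemma meas_ball (p : ℕ) [hp : Fact p.Prime] (n : ℕ) (k : ℤ) :
    μp p n (closedBall (0 : Fin n → ℚ_[p]) ((p:ℝ) ^ k))
      = ENNReal.ofReal ((p:ℝ) ^ ((n:ℤ) * k)) := by
  have hp0 : (0:ℝ) < p := by exact_mod_cast hp.out.pos
  induction k using Int.induction_on with
  | zero => simpa using meas_unit p n
  | succ k ih =>
      rw [meas_ball_succ p n k, ih, pn_ofReal,
        ← ENNReal.ofReal_mul (by positivity), ← zpow_add₀ hp0.ne']
      ring_nf
  | pred k ih =>
      have h := meas_ball_succ p n (-(k+1):ℤ)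
      rw [show (-(k+1):ℤ) + 1 = -k by ring, ih] at h
      rw [show (-(k:ℤ) - 1) = -((k:ℤ)+1) by ring, ← ENNReal.mul_right_inj (pn_ne_zero p n) (pn_ne_top p n), ← h, pn_ofReal,
        ← ENNReal.ofReal_mul (by positivity), ← zpow_add₀ hp0.ne']
      ring_nf

lemma padic_pi_exists_norm_eq (p : ℕ) [hp : Fact p.Prime] (n : ℕ) (x : Fin n → ℚ_[p]) (hx : x ≠ 0) :
    ∃ k : ℤ, ‖x‖ = (p:ℝ) ^ k := by
  obtain ⟨j, hj⟩ : ∃ j, x j ≠ 0 := by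
    by_contra hc; push_neg at hc; exact hx (funext fun i => hc i)
  have hne : (Finset.univ : Finset (Fin n)).Nonempty := ⟨j, Finset.mem_univ j⟩
  obtain ⟨i, _, hi⟩ := Finset.exists_mem_eq_sup Finset.univ hne (fun i => ‖x i‖₊)
  have hnorm : ‖x‖ = ‖x i‖ := by
    rw [← coe_nnnorm, ← coe_nnnorm, Pi.nnnorm_def, hi]
  have hxi : x i ≠ 0 := by
    intro h0
    have h1 : 0 < ‖x j‖ := norm_pos_iff.mpr hj
    have h2 : ‖x j‖ ≤ ‖x‖ := norm_le_pi_norm x j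
    rw [hnorm, h0, norm_zero] at h2
    linarith
  exact ⟨-(x i).valuation, by rw [hnorm, Padic.norm_eq_zpow_neg_valuation hxi]⟩

lemma meas_sphere (p : ℕ) [hp : Fact p.Prime] (n : ℕ) (k : ℤ) :
    μp p n {x : Fin n → ℚ_[p] | ‖x‖ = (p:ℝ) ^ k}
      = ENNReal.ofReal ((p:ℝ) ^ ((n:ℤ) * k) * (1 - (p:ℝ) ^ (-(n:ℤ)))) := by
  have hp1 : (1:ℝ) < p := Nat.one_lt_cast.mpr hp.out.one_lt
  have hp0 : (0:ℝ) < p := lt_trans one_pos hp1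
  have hset : {x : Fin n → ℚ_[p] | ‖x‖ = (p:ℝ) ^ k}
      = closedBall 0 ((p:ℝ)^k) \ closedBall 0 ((p:ℝ)^(k-1)) := by
    ext x
    simp only [mem_setOf_eq, mem_diff, mem_closedBall, dist_zero_right, not_le]
    constructor
    · intro h
      exact ⟨le_of_eq h, by rw [h]; exact zpow_lt_zpow_right₀ hp1 (by omega)⟩
    · rintro ⟨h1, h2⟩
      have hx0 : x ≠ 0 := by
        intro h0
        rw [h0, norm_zero] at h2
        exact absurd h2 (not_lt.mpr (zpow_nonneg hp0.le _))
      obtain ⟨m, hm⟩ := padic_pi_exists_norm_eq p n x hx0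
      rw [hm] at h1 h2 ⊢
      have hmk : m ≤ k := le_of_not_gt fun hc =>
        absurd h1 (not_le.mpr (zpow_lt_zpow_right₀ hp1 hc))
      have hkm : k - 1 < m := (zpow_lt_zpow_iff_right₀ hp1).mp h2
      have : m = k := by omega
      rw [this]
  rw [hset, measure_diff
      (closedBall_subset_closedBall (zpow_le_zpow_right₀ hp1.le (by omega)))
      measurableSet_closedBall.nullMeasurableSet
      (by rw [meas_ball]; exact ENNReal.ofReal_ne_top),
    meas_ball, meas_ball, ← ENNReal.ofReal_sub _ (zpow_nonneg hp0.le _)]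
  congr 1
  rw [show ((n:ℤ) * (k-1)) = (n:ℤ)*k + (-(n:ℤ)) from by ring, zpow_add₀ hp0.ne',
    mul_sub, mul_one]

lemma padic_term_closed (p : ℕ) [hp : Fact p.Prime] (n : ℕ) (γ : ℝ) (k₀ : ℤ) (j : ℕ) :
    ((p:ℝ) ^ (k₀ - j : ℤ)) ^ γ * ((p:ℝ) ^ ((n:ℤ) * (k₀ - j)) * (1 - (p:ℝ) ^ (-(n:ℤ))))
      = ((1 - (p:ℝ) ^ (-(n:ℝ))) * (p:ℝ) ^ ((k₀:ℝ) * ((n:ℝ) + γ)))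
          * ((p:ℝ) ^ (-((n:ℝ) + γ))) ^ j := by
  have hp1 : (1:ℝ) < p := Nat.one_lt_cast.mpr hp.out.one_lt
  have hb : (0:ℝ) < p := lt_trans one_pos hp1
  have e1 : ((p:ℝ) ^ (-((n:ℝ)+γ))) ^ (j:ℕ) = (p:ℝ) ^ (-((n:ℝ)+γ) * j) := by
    rw [← Real.rpow_natCast ((p:ℝ) ^ (-((n:ℝ)+γ))) j, ← Real.rpow_mul hb.le]
  have e2 : ((p:ℝ) ^ ((k₀ - j : ℤ))) ^ γ = (p:ℝ) ^ (((k₀:ℝ) - j) * γ) := by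
    rw [← Real.rpow_intCast (p:ℝ) (k₀ - j), ← Real.rpow_mul hb.le]
    congr 1
    push_cast
    ring
  have e3 : (p:ℝ) ^ ((n:ℤ) * (k₀ - j)) = (p:ℝ) ^ ((n:ℝ) * ((k₀:ℝ) - j)) := by
    rw [← Real.rpow_intCast (p:ℝ)]
    congr 1
    push_cast
    ring
  have e4 : (p:ℝ) ^ (-(n:ℤ)) = (p:ℝ) ^ (-(n:ℝ)) := by
    rw [← Real.rpow_intCast (p:ℝ)]
    congr 1
    push_cast
    ring
  have hAB : (p:ℝ) ^ (((k₀:ℝ) - j) * γ) * (p:ℝ) ^ ((n:ℝ) * ((k₀:ℝ) - j))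
      = (p:ℝ) ^ ((k₀:ℝ) * ((n:ℝ) + γ)) * (p:ℝ) ^ (-((n:ℝ) + γ) * j) := by
    rw [← Real.rpow_add hb, ← Real.rpow_add hb]
    congr 1
    ring
  rw [e1, e2, e3, e4]
  rw [show ((p:ℝ) ^ (((k₀:ℝ) - j) * γ)) * ((p:ℝ) ^ ((n:ℝ) * ((k₀:ℝ) - j)) * (1 - (p:ℝ) ^ (-(n:ℝ))))
      = ((p:ℝ) ^ (((k₀:ℝ) - j) * γ) * (p:ℝ) ^ ((n:ℝ) * ((k₀:ℝ) - j))) * (1 - (p:ℝ) ^ (-(n:ℝ)))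
    from by ring, hAB]
  ring

lemma padic_geom_bound (p : ℕ) [hp : Fact p.Prime] (n : ℕ) (γ r : ℝ) (hγ : 0 < (n:ℝ) + γ)
    (hr : 0 < r) (k₀ : ℤ) (hk₀ : (p:ℝ) ^ k₀ < r) :
    ∑' j : ℕ, ((p:ℝ) ^ (k₀ - j : ℤ)) ^ γ *
        ((p:ℝ) ^ ((n:ℤ) * (k₀ - j)) * (1 - (p:ℝ) ^ (-(n:ℤ))))
      ≤ (1 - (p:ℝ) ^ (-(n:ℝ))) / (1 - (p:ℝ) ^ (-((n:ℝ) + γ))) * r ^ ((n:ℝ) + γ) := by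
  have hp1 : (1:ℝ) < p := Nat.one_lt_cast.mpr hp.out.one_lt
  have hb : (0:ℝ) < p := lt_trans one_pos hp1
  set q : ℝ := (p:ℝ) ^ (-((n:ℝ) + γ)) with hq
  have hq0 : 0 ≤ q := Real.rpow_nonneg hb.le _
  have hq1 : q < 1 := Real.rpow_lt_one_of_one_lt_of_neg hp1 (neg_neg_iff_pos.mpr hγ)
  have hone : 0 ≤ 1 - (p:ℝ) ^ (-(n:ℝ)) := by
    have : (p:ℝ) ^ (-(n:ℝ)) ≤ 1 :=
      Real.rpow_le_one_of_one_le_of_nonpos hp1.le (neg_nonpos.mpr (Nat.cast_nonneg n))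
    linarith
  simp_rw [padic_term_closed p n γ k₀]
  rw [tsum_mul_left, tsum_geometric_of_lt_one hq0 hq1]
  have hbound : (p:ℝ) ^ ((k₀:ℝ) * ((n:ℝ) + γ)) ≤ r ^ ((n:ℝ) + γ) := by
    have h1 : (p:ℝ) ^ ((k₀:ℝ)) ≤ r := by
      rw [Real.rpow_intCast]; exact hk₀.le
    calc (p:ℝ) ^ ((k₀:ℝ) * ((n:ℝ) + γ)) = ((p:ℝ) ^ (k₀:ℝ)) ^ ((n:ℝ) + γ) :=
          Real.rpow_mul hb.le _ _
      _ ≤ r ^ ((n:ℝ) + γ) :=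
          Real.rpow_le_rpow (Real.rpow_nonneg hb.le _) h1 hγ.le
  have hc : 0 ≤ (1 - q)⁻¹ := inv_nonneg.mpr (by linarith)
  calc (1 - (p:ℝ)^(-(n:ℝ))) * ((p:ℝ)^((k₀:ℝ)*((n:ℝ)+γ))) * (1-q)⁻¹
      ≤ ((1 - (p:ℝ)^(-(n:ℝ))) * r ^ ((n:ℝ)+γ)) * (1-q)⁻¹ :=
        mul_le_mul_of_nonneg_right (mul_le_mul_of_nonneg_left hbound hone) hc
    _ = (1 - (p:ℝ)^(-(n:ℝ))) / (1 - q) * r ^ ((n:ℝ)+γ) := by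
        rw [div_eq_mul_inv]; ring

lemma padic_term_summable (p : ℕ) [hp : Fact p.Prime] (n : ℕ) (γ : ℝ) (hγ : 0 < (n:ℝ) + γ)
    (k₀ : ℤ) :
    Summable (fun j : ℕ => ((p:ℝ) ^ (k₀ - j : ℤ)) ^ γ *
        ((p:ℝ) ^ ((n:ℤ) * (k₀ - j)) * (1 - (p:ℝ) ^ (-(n:ℤ))))) := by
  have hp1 : (1:ℝ) < p := Nat.one_lt_cast.mpr hp.out.one_lt
  have hb : (0:ℝ) < p := lt_trans one_pos hp1
  simp_rw [padic_term_closed p n γ k₀]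
  exact (summable_geometric_of_lt_one (Real.rpow_nonneg hb.le _)
    (Real.rpow_lt_one_of_one_lt_of_neg hp1 (neg_neg_iff_pos.mpr hγ))).mul_left _

lemma padic_term_nonneg (p : ℕ) [hp : Fact p.Prime] (n : ℕ) (γ : ℝ) (k₀ : ℤ) (j : ℕ) :
    0 ≤ ((p:ℝ) ^ (k₀ - j : ℤ)) ^ γ *
        ((p:ℝ) ^ ((n:ℤ) * (k₀ - j)) * (1 - (p:ℝ) ^ (-(n:ℤ)))) := by
  have hp1 : (1:ℝ) < p := Nat.one_lt_cast.mpr hp.out.one_lt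
  have hb : (0:ℝ) < p := lt_trans one_pos hp1
  have h1 : (p:ℝ) ^ (-(n:ℤ)) ≤ 1 := by
    apply zpow_le_one_of_nonpos₀ hp1.le (by omega)
  have h2 : (0:ℝ) ≤ 1 - (p:ℝ) ^ (-(n:ℤ)) := by linarith
  have h3 : (0:ℝ) ≤ ((p:ℝ) ^ (k₀ - j : ℤ)) ^ γ := Real.rpow_nonneg (zpow_nonneg hb.le _) _
  have h4 : (0:ℝ) ≤ (p:ℝ) ^ ((n:ℤ) * (k₀ - j)) := zpow_nonneg hb.le _
  exact mul_nonneg h3 (mul_nonneg h4 h2)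

lemma measurable_sphere (p : ℕ) [hp : Fact p.Prime] (n : ℕ) (c : ℝ) :
    MeasurableSet {x : Fin n → ℚ_[p] | ‖x‖ = c} :=
  measurable_norm (measurableSet_singleton c)

lemma key_integral_bound (p : ℕ) [hp : Fact p.Prime] (n : ℕ) (γ : ℝ) (hγ : 0 < (n:ℝ) + γ)
    (r : ℝ) (hr : 0 < r) :
    ∫⁻ x in {x : Fin n → ℚ_[p] | x ≠ 0 ∧ ‖x‖ < r}, ENNReal.ofReal (‖x‖ ^ γ) ∂(μp p n)
      ≤ ENNReal.ofReal
          ((1 - (p:ℝ) ^ (-(n:ℝ))) / (1 - (p:ℝ) ^ (-((n:ℝ) + γ))) * r ^ ((n:ℝ) + γ)) := by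
  have hp1 : (1:ℝ) < p := Nat.one_lt_cast.mpr hp.out.one_lt
  have hb : (0:ℝ) < p := lt_trans one_pos hp1
  set k₀ : ℤ := ⌈Real.logb p r⌉ - 1 with hk₀def
  have hiff : ∀ k : ℤ, (p:ℝ) ^ k < r ↔ k ≤ k₀ := by
    intro k
    rw [← Real.rpow_intCast (p:ℝ) k, ← Real.rpow_logb hb hp1.ne' hr,
      Real.rpow_lt_rpow_left_iff hp1]
    constructor
    · intro h
      have h2 := Int.lt_ceil.mpr h
      omega
    · intro h
      exact Int.lt_ceil.mp (by omega)
  have hset : {x : Fin n → ℚ_[p] | x ≠ 0 ∧ ‖x‖ < r}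
      = ⋃ j : ℕ, {x : Fin n → ℚ_[p] | ‖x‖ = (p:ℝ) ^ (k₀ - j : ℤ)} := by
    ext x
    simp only [mem_setOf_eq, mem_iUnion]
    constructor
    · rintro ⟨hx0, hxr⟩
      obtain ⟨m, hm⟩ := padic_pi_exists_norm_eq p n x hx0
      have hmk : m ≤ k₀ := (hiff m).mp (hm ▸ hxr)
      refine ⟨(k₀ - m).toNat, ?_⟩
      rw [hm]
      congr 1
      omega
    · rintro ⟨j, hj⟩
      have hpos : (0:ℝ) < (p:ℝ) ^ (k₀ - j : ℤ) := zpow_pos hb _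
      refine ⟨fun h0 => by simp [h0] at hj; linarith, ?_⟩
      rw [hj, hiff]
      omega
  have hdisj : Pairwise (Function.onFun Disjoint
      (fun j : ℕ => {x : Fin n → ℚ_[p] | ‖x‖ = (p:ℝ) ^ (k₀ - j : ℤ)})) := by
    intro i j hij
    rw [Function.onFun, Set.disjoint_left]
    intro x hxi hxj
    rw [mem_setOf_eq] at hxi hxj
    have := hxi.symm.trans hxj
    have hexp : (k₀ - i : ℤ) = (k₀ - j : ℤ) :=
      zpow_right_injective₀ hb hp1.ne' this
    omega
  rw [hset, lintegral_iUnion (fun j => measurable_sphere p n _) hdisj]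
  have hstrat : ∀ j : ℕ,
      ∫⁻ x in {x : Fin n → ℚ_[p] | ‖x‖ = (p:ℝ) ^ (k₀ - j : ℤ)},
          ENNReal.ofReal (‖x‖ ^ γ) ∂(μp p n)
        = ENNReal.ofReal (((p:ℝ) ^ (k₀ - j : ℤ)) ^ γ *
            ((p:ℝ) ^ ((n:ℤ) * (k₀ - j)) * (1 - (p:ℝ) ^ (-(n:ℤ))))) := by
    intro j
    rw [setLIntegral_congr_fun (measurable_sphere p n _)
      (fun x (hx : ‖x‖ = (p:ℝ) ^ (k₀ - j : ℤ)) => by rw [hx]),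
      setLIntegral_const, meas_sphere p n (k₀ - j),
      ← ENNReal.ofReal_mul (Real.rpow_nonneg (zpow_nonneg hb.le _) _)]
  simp_rw [hstrat]
  rw [← ENNReal.ofReal_tsum_of_nonneg (padic_term_nonneg p n γ k₀)
    (padic_term_summable p n γ hγ k₀)]
  exact ENNReal.ofReal_le_ofReal
    (padic_geom_bound p n γ r hγ hr k₀ ((hiff k₀).mpr le_rfl))

/-- Weak type estimate for the fractional `p`-adic Hardy operator:
`‖H^p_α f‖_{L^{(n+γ)/(n-α),∞}(|x|_p^γ)} ≤ C ‖f‖_{L¹}` with the sharp constant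
`C = ((1-p^{-n})/(1-p^{-(n+γ)}))^{(n-α)/(n+γ)}`. -/
theorem hardy_weak_type_bound (p : ℕ) [Fact p.Prime] (n : ℕ) (hn : 0 < n)
    (α : ℝ) (hα0 : 0 < α) (hα : α < n) (γ : ℝ) (hγ : 0 < (n : ℝ) + γ)
    (f : (Fin n → ℚ_[p]) → ℝ) (hf : Integrable f (μp p n)) :
    (⨆ (t : ℝ) (_ : 0 < t), ENNReal.ofReal t *
        (∫⁻ x in {x : Fin n → ℚ_[p] | t < |Hop p n α f x|},
          ENNReal.ofReal (‖x‖ ^ γ) ∂(μp p n)) ^ (((n : ℝ) - α) / ((n : ℝ) + γ))) ≤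
      ENNReal.ofReal
        (((1 - (p : ℝ) ^ (-(n : ℝ))) / (1 - (p : ℝ) ^ (-((n : ℝ) + γ)))) ^
            (((n : ℝ) - α) / ((n : ℝ) + γ)) * ∫ y, |f y| ∂(μp p n)) := by
  have hp1 : (1:ℝ) < p := Nat.one_lt_cast.mpr (Fact.out (p := p.Prime)).one_lt
  have hb : (0:ℝ) < p := lt_trans one_pos hp1
  have hnα : (0:ℝ) < (n:ℝ) - α := by linarith
  set s : ℝ := ((n:ℝ) - α) / ((n:ℝ) + γ) with hs
  have hs0 : 0 < s := div_pos hnα hγ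
  set C : ℝ := (1 - (p:ℝ) ^ (-(n:ℝ))) / (1 - (p:ℝ) ^ (-((n:ℝ) + γ))) with hC
  have hden : (0:ℝ) < 1 - (p:ℝ) ^ (-((n:ℝ) + γ)) := by
    have : (p:ℝ) ^ (-((n:ℝ) + γ)) < 1 :=
      Real.rpow_lt_one_of_one_lt_of_neg hp1 (neg_neg_iff_pos.mpr hγ)
    linarith
  have hnum : (0:ℝ) ≤ 1 - (p:ℝ) ^ (-(n:ℝ)) := by
    have : (p:ℝ) ^ (-(n:ℝ)) ≤ 1 :=
      Real.rpow_le_one_of_one_le_of_nonpos hp1.le (neg_nonpos.mpr (Nat.cast_nonneg n))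
    linarith
  have hC0 : 0 ≤ C := div_nonneg hnum hden.le
  set I : ℝ := ∫ y, |f y| ∂(μp p n) with hI
  have hI0 : 0 ≤ I := integral_nonneg (fun y => abs_nonneg _)
  have hpt : ∀ x : Fin n → ℚ_[p], |Hop p n α f x| ≤ ‖x‖ ^ (α - (n:ℝ)) * I := by
    intro x
    rw [Hop, abs_mul, abs_of_nonneg (Real.rpow_nonneg (norm_nonneg x) _)]
    apply mul_le_mul_of_nonneg_left _ (Real.rpow_nonneg (norm_nonneg x) _)
    calc |∫ y in {y : Fin n → ℚ_[p] | ‖y‖ ≤ ‖x‖}, f y ∂(μp p n)|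
        ≤ ∫ y in {y : Fin n → ℚ_[p] | ‖y‖ ≤ ‖x‖}, |f y| ∂(μp p n) := by
          simpa [Real.norm_eq_abs] using
            norm_integral_le_integral_norm
              (μ := (μp p n).restrict {y : Fin n → ℚ_[p] | ‖y‖ ≤ ‖x‖}) f
      _ ≤ I := integral_mono_measure Measure.restrict_le_self
          (Filter.Eventually.of_forall (fun y => abs_nonneg _)) hf.abs
  apply iSup_le
  intro t
  apply iSup_le
  intro ht
  rcases eq_or_lt_of_le hI0 with hIz | hIpos
  · -- I = 0 : level set is empty
    have hempty : {x : Fin n → ℚ_[p] | t < |Hop p n α f x|} = ∅ := by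
      ext x
      simp only [mem_setOf_eq, mem_empty_iff_false, iff_false, not_lt]
      calc |Hop p n α f x| ≤ ‖x‖ ^ (α - (n:ℝ)) * I := hpt x
        _ = 0 := by rw [← hIz, mul_zero]
        _ ≤ t := ht.le
    rw [hempty]
    simp [ENNReal.zero_rpow_of_pos hs0]
  · -- main case
    set r : ℝ := (I / t) ^ (((n:ℝ) - α)⁻¹) with hr
    have hrpos : 0 < r := Real.rpow_pos_of_pos (div_pos hIpos ht) _
    have hsub : {x : Fin n → ℚ_[p] | t < |Hop p n α f x|}
        ⊆ {x : Fin n → ℚ_[p] | x ≠ 0 ∧ ‖x‖ < r} := by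
      intro x hx
      rw [mem_setOf_eq] at hx
      have hx0 : x ≠ 0 := by
        intro h0
        rw [h0] at hx
        have : |Hop p n α f 0| = 0 := by
          rw [Hop, norm_zero, Real.zero_rpow (by linarith : α - (n:ℝ) ≠ 0), zero_mul, abs_zero]
        rw [this] at hx
        linarith
      refine ⟨hx0, ?_⟩
      have hxn : 0 < ‖x‖ := norm_pos_iff.mpr hx0
      have h1 : t < ‖x‖ ^ (α - (n:ℝ)) * I := lt_of_lt_of_le hx (hpt x)
      have h2 : ‖x‖ ^ (α - (n:ℝ)) = (‖x‖ ^ ((n:ℝ) - α))⁻¹ := by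
        rw [← Real.rpow_neg (norm_nonneg x)]
        congr 1
        ring
      have hxp : 0 < ‖x‖ ^ ((n:ℝ) - α) := Real.rpow_pos_of_pos hxn _
      have h3 : ‖x‖ ^ ((n:ℝ) - α) < I / t := by
        rw [lt_div_iff₀ ht]
        rw [h2] at h1
        calc ‖x‖ ^ ((n:ℝ) - α) * t < ‖x‖ ^ ((n:ℝ) - α) * ((‖x‖ ^ ((n:ℝ) - α))⁻¹ * I) :=
              mul_lt_mul_of_pos_left h1 hxp
          _ = I := by field_simp
      calc ‖x‖ = (‖x‖ ^ ((n:ℝ) - α)) ^ (((n:ℝ) - α)⁻¹) := by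
            rw [← Real.rpow_mul (norm_nonneg x), mul_inv_cancel₀ hnα.ne', Real.rpow_one]
        _ < r := Real.rpow_lt_rpow hxp.le h3 (inv_pos.mpr hnα)
    have hmono : ∫⁻ x in {x : Fin n → ℚ_[p] | t < |Hop p n α f x|},
          ENNReal.ofReal (‖x‖ ^ γ) ∂(μp p n)
        ≤ ∫⁻ x in {x : Fin n → ℚ_[p] | x ≠ 0 ∧ ‖x‖ < r},
          ENNReal.ofReal (‖x‖ ^ γ) ∂(μp p n) :=
      lintegral_mono' (Measure.restrict_mono hsub le_rfl) (fun x => le_rfl)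
    have hkey := key_integral_bound p n γ hγ r hrpos
    calc ENNReal.ofReal t *
          (∫⁻ x in {x : Fin n → ℚ_[p] | t < |Hop p n α f x|},
            ENNReal.ofReal (‖x‖ ^ γ) ∂(μp p n)) ^ s
        ≤ ENNReal.ofReal t * (ENNReal.ofReal (C * r ^ ((n:ℝ) + γ))) ^ s := by
          apply mul_le_mul_right
          exact ENNReal.rpow_le_rpow (le_trans hmono hkey) hs0.le
      _ = ENNReal.ofReal (C ^ s * I) := by
          rw [ENNReal.ofReal_rpow_of_nonneg
              (mul_nonneg hC0 (Real.rpow_nonneg hrpos.le _)) hs0.le,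
            ← ENNReal.ofReal_mul ht.le]
          congr 1
          rw [Real.mul_rpow hC0 (Real.rpow_nonneg hrpos.le _)]
          have hr1 : (r ^ ((n:ℝ) + γ)) ^ s = I / t := by
            rw [hr, ← Real.rpow_mul (div_pos hIpos ht).le,
              ← Real.rpow_mul (div_pos hIpos ht).le,
              show ((n:ℝ) - α)⁻¹ * ((n:ℝ) + γ) * s = 1 from by rw [hs]; field_simp,
              Real.rpow_one]
          rw [hr1]
          field_simp
end

section
/- Let 1 ≤ q < ∞ and −1/q ≤ λ < 0, and let f belong to the p-adic central Morrey space Ḃ^{q,λ}(Q_p^n). Then for every x ∈ Q_p^n \ {0}, the p-adic Hardy operator satisfies |H^p f(x)| ≤ |x|_p^{nλ} ‖f‖_{Ḃ^{q,λ}(Q_p^n)}. -/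
open MeasureTheory Metric Set
open scoped ENNReal NNReal

/-! Write `‖x‖ = p ^ γ` and let `B_γ` be the ball of radius `p ^ γ`. Hölder's inequality on
`B_γ` bounds `|∫_{B_γ} f|` by `(∫_{B_γ} |f| ^ q) ^ (1 / q) · |B_γ| ^ (1 - 1 / q)`, and the first
factor is at most `|B_γ| ^ ((1 + λ q) / q)` times the Morrey norm, by the definition of that norm.
The Haar measure of `B_γ` is `p ^ (n γ)`: in the ultrametric space `ℚ_[p]ⁿ` the ball `B_{γ+1}`
is the disjoint union of the `pⁿ` balls of radius `p ^ γ` centred at the points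
`v · p ^ (-(γ + 1))` with `v ∈ {0, …, p - 1}ⁿ`. The powers of `p ^ γ` then combine to
`|x|_p ^ (n λ)`. -/

theorem measure_closedBall_eq_card_mul {E ι : Type*} [NormedAddCommGroup E] [IsUltrametricDist E]
    [MeasurableSpace E] [OpensMeasurableSpace E] [MeasurableAdd E] (μ : Measure E)
    [μ.IsAddLeftInvariant] [Fintype ι] (c : ι → E) {r R : ℝ}
    (hcover : closedBall 0 R = ⋃ i, closedBall (c i) r)
    (hsep : Pairwise fun i j => r < dist (c i) (c j)) :
    μ (closedBall 0 R) = Fintype.card ι * μ (closedBall 0 r) := by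
  have hdisj : Pairwise (Function.onFun Disjoint fun i => closedBall (c i) r) := by
    refine fun i j hij => Set.disjoint_left.2 fun y hi hj => (hsep hij).not_ge ?_
    calc dist (c i) (c j) ≤ max (dist (c i) y) (dist y (c j)) :=
          IsUltrametricDist.dist_triangle_max _ _ _
      _ ≤ r := max_le (dist_comm y (c i) ▸ hi) hj
  have htransl (i : ι) : μ (closedBall (c i) r) = μ (closedBall 0 r) := by
    rw [← measure_preimage_add μ (c i), preimage_add_closedBall, sub_self]
  rw [hcover, measure_iUnion hdisj fun i => measurableSet_closedBall, tsum_fintype]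
  simp [htransl]

theorem enorm_setIntegral_le_lintegral_rpow_mul_measure {α E : Type*} [MeasurableSpace α]
    [NormedAddCommGroup E] [NormedSpace ℝ E] {μ : Measure α} {s : Set α} {f : α → E} {q : ℝ}
    (hq : 1 ≤ q) (hf : AEStronglyMeasurable f (μ.restrict s)) :
    ‖∫ x in s, f x ∂μ‖ₑ ≤ (∫⁻ x in s, ‖f x‖ₑ ^ q ∂μ) ^ (1 / q) * μ s ^ (1 - 1 / q) := by
  calc ‖∫ x in s, f x ∂μ‖ₑ ≤ ∫⁻ x in s, ‖f x‖ₑ ∂μ := enorm_integral_le_lintegral_enorm _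
    _ = eLpNorm' f 1 (μ.restrict s) := by simp [eLpNorm']
    _ ≤ eLpNorm' f q (μ.restrict s) * μ.restrict s univ ^ (1 / 1 - 1 / q) :=
      eLpNorm'_le_eLpNorm'_mul_rpow_measure_univ one_pos hq hf
    _ = _ := by rw [eLpNorm', Measure.restrict_apply_univ, div_one]

theorem ENNReal.ofReal_natCast_rpow {p : ℕ} (hp : 0 < p) (s : ℝ) :
    ENNReal.ofReal ((p : ℝ) ^ s) = (p : ℝ≥0∞) ^ s := by
  rw [← ENNReal.ofReal_rpow_of_pos (by exact_mod_cast hp), ENNReal.ofReal_natCast]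

theorem ENNReal.ofReal_natCast_zpow_rpow {p : ℕ} (hp : 0 < p) (γ : ℤ) (t : ℝ) :
    ENNReal.ofReal (((p : ℝ) ^ γ) ^ t) = (p : ℝ≥0∞) ^ (γ * t) := by
  rw [← Real.rpow_intCast, ← Real.rpow_mul (Nat.cast_nonneg p), ENNReal.ofReal_natCast_rpow hp]

namespace Padic

variable {p : ℕ} [Fact p.Prime]

theorem exists_natCast_norm_sub_le {z : ℚ_[p]} (hz : ‖z‖ ≤ 1) :
    ∃ k < p, ‖z - (k : ℚ_[p])‖ ≤ (p : ℝ)⁻¹ := by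
  obtain ⟨k, hk, hmem⟩ := PadicInt.exists_mem_range (⟨z, hz⟩ : ℤ_[p])
  rw [PadicInt.maximalIdeal_eq_span_p, Ideal.mem_span_singleton,
    ← PadicInt.norm_lt_one_iff_dvd] at hmem
  refine ⟨k, hk, ?_⟩
  have := (PadicInt.norm_le_pow_iff_norm_lt_pow_add_one _ (-1)).2
    (by rwa [neg_add_cancel, zpow_zero])
  rwa [zpow_neg_one] at this

theorem exists_natCast_mul_norm_sub_le {u z : ℚ_[p]} (hu : u ≠ 0) (hz : ‖z‖ ≤ ‖u‖) :
    ∃ k < p, ‖z - k * u‖ ≤ ‖u‖ / p := by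
  have hzu : ‖z / u‖ ≤ 1 := by
    rwa [norm_div, div_le_one (norm_pos_iff.2 hu)]
  obtain ⟨k, hk, hle⟩ := exists_natCast_norm_sub_le hzu
  refine ⟨k, hk, ?_⟩
  calc ‖z - k * u‖ = ‖z / u - k‖ * ‖u‖ := by
        rw [← norm_mul, sub_mul, div_mul_cancel₀ z hu]
    _ ≤ (p : ℝ)⁻¹ * ‖u‖ := by gcongr
    _ = ‖u‖ / p := inv_mul_eq_div _ _

theorem norm_natCast_sub_natCast {k k' : ℕ} (hk : k < p) (hk' : k' < p) (hne : k ≠ k') :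
    ‖(k : ℚ_[p]) - k'‖ = 1 := by
  have hndvd : ¬ (p : ℤ) ∣ (k - k' : ℤ) := fun hdvd =>
    hne (by exact_mod_cast sub_eq_zero.1 (Int.eq_zero_of_abs_lt_dvd hdvd
      (abs_lt.2 ⟨by omega, by omega⟩)))
  have := (norm_int_le_one (p := p) (k - k')).lt_or_eq
  push_cast at this
  exact this.resolve_left fun h => hndvd (norm_intCast_lt_one_iff.1 (by exact_mod_cast h))

variable {ι : Type*} [Fintype ι]

theorem exists_pi_norm_eq_zpow {x : ι → ℚ_[p]} (hx : x ≠ 0) :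
    ∃ γ : ℤ, ‖x‖ = (p : ℝ) ^ γ := by
  obtain ⟨i, -⟩ := Function.ne_iff.1 hx
  have : Nonempty ι := ⟨i⟩
  obtain ⟨j, -, hj⟩ := Finset.exists_mem_eq_sup Finset.univ Finset.univ_nonempty (‖x ·‖₊)
  have hnorm : ‖x‖ = ‖x j‖ := congrArg NNReal.toReal hj
  have hxj : x j ≠ 0 := by
    rw [← norm_ne_zero_iff, ← hnorm, norm_ne_zero_iff]
    exact hx
  exact ⟨-(x j).valuation, by rw [hnorm, norm_eq_zpow_neg_valuation hxj]⟩

theorem closedBall_zero_norm_eq_iUnion {u : ℚ_[p]} (hu : u ≠ 0) :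
    closedBall (0 : ι → ℚ_[p]) ‖u‖ =
      ⋃ v : ι → Fin p, closedBall (fun i => (v i : ℚ_[p]) * u) (‖u‖ / p) := by
  have hp : (1 : ℝ) ≤ p := by exact_mod_cast (Fact.out : p.Prime).one_le
  have hr : 0 ≤ ‖u‖ / p := by positivity
  ext y
  rw [mem_closedBall_zero_iff, pi_norm_le_iff_of_nonneg (norm_nonneg u)]
  simp only [mem_iUnion, mem_closedBall, dist_eq_norm, pi_norm_le_iff_of_nonneg hr, Pi.sub_apply]
  constructor
  · intro hy
    choose k hk hle using fun i => exists_natCast_mul_norm_sub_le hu (hy i)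
    exact ⟨fun i => ⟨k i, hk i⟩, hle⟩
  · rintro ⟨v, hv⟩ i
    have hcentre : ‖(v i : ℚ_[p]) * u‖ ≤ ‖u‖ := by
      rw [norm_mul]
      exact mul_le_of_le_one_left (norm_nonneg u) (IsUltrametricDist.norm_natCast_le_one ℚ_[p] _)
    calc ‖y i‖ = ‖(y i - v i * u) + v i * u‖ := by rw [sub_add_cancel]
      _ ≤ max ‖y i - v i * u‖ ‖(v i : ℚ_[p]) * u‖ :=
        IsUltrametricDist.norm_add_le_max _ _
      _ ≤ ‖u‖ := max_le ((hv i).trans (div_le_self (norm_nonneg u) hp)) hcentre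

theorem div_natCast_lt_dist_natCast_mul {u : ℚ_[p]} (hu : u ≠ 0) {v v' : ι → Fin p}
    (hv : v ≠ v') :
    ‖u‖ / p < dist (fun i => (v i : ℚ_[p]) * u) (fun i => (v' i : ℚ_[p]) * u) := by
  obtain ⟨i, hi⟩ := Function.ne_iff.1 hv
  have hp : (1 : ℝ) < p := by exact_mod_cast (Fact.out : p.Prime).one_lt
  calc ‖u‖ / p < ‖u‖ := div_lt_self (norm_pos_iff.2 hu) hp
    _ = dist ((v i : ℚ_[p]) * u) ((v' i : ℚ_[p]) * u) := by
      rw [dist_eq_norm, ← sub_mul, norm_mul,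
        norm_natCast_sub_natCast (v i).2 (v' i).2 (Fin.val_injective.ne hi), one_mul]
    _ ≤ _ := dist_le_pi_dist (fun i => (v i : ℚ_[p]) * u) (fun i => (v' i : ℚ_[p]) * u) i

theorem measure_closedBall_zero_norm (μ : Measure (ι → ℚ_[p])) [μ.IsAddLeftInvariant]
    {u : ℚ_[p]} (hu : u ≠ 0) :
    μ (closedBall 0 ‖u‖) = p ^ Fintype.card ι * μ (closedBall 0 (‖u‖ / p)) := by
  classical
  rw [measure_closedBall_eq_card_mul μ _ (closedBall_zero_norm_eq_iUnion hu)
    fun v v' => div_natCast_lt_dist_natCast_mul hu]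
  simp

end Padic

section μp

variable {p : ℕ} [Fact p.Prime] {n : ℕ}

instance : (μp p n).IsAddHaarMeasure := Measure.isAddHaarMeasure_addHaarMeasure _

theorem μp_closedBall_zpow_add_one (a : ℤ) :
    μp p n (closedBall 0 ((p : ℝ) ^ (a + 1))) =
      p ^ n * μp p n (closedBall 0 ((p : ℝ) ^ a)) := by
  have hp : (p : ℝ) ≠ 0 := by exact_mod_cast (Fact.out : p.Prime).ne_zero
  have hu : ‖(p : ℚ_[p]) ^ (-(a + 1))‖ = (p : ℝ) ^ (a + 1) := by
    rw [Padic.norm_p_zpow, neg_neg]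
  have hu' : ‖(p : ℚ_[p]) ^ (-(a + 1))‖ / p = (p : ℝ) ^ a := by
    rw [hu, zpow_add_one₀ hp, mul_div_cancel_right₀ _ hp]
  have := Padic.measure_closedBall_zero_norm (μp p n) (u := (p : ℚ_[p]) ^ (-(a + 1)))
    (zpow_ne_zero _ (by exact_mod_cast (Fact.out : p.Prime).ne_zero))
  rwa [hu', hu, Fintype.card_fin] at this

theorem μp_closedBall_zpow (γ : ℤ) :
    μp p n (closedBall 0 ((p : ℝ) ^ γ)) = (p : ℝ≥0∞) ^ ((n : ℝ) * γ) := by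
  have hp0 : (p : ℝ≥0∞) ≠ 0 := by exact_mod_cast (Fact.out : p.Prime).ne_zero
  have hpt : (p : ℝ≥0∞) ≠ ⊤ := ENNReal.natCast_ne_top p
  induction γ using Int.induction_on with
  | zero =>
    simp only [zpow_zero, Int.cast_zero, mul_zero, ENNReal.rpow_zero]
    exact Measure.addHaarMeasure_self
  | succ k ih =>
    rw [μp_closedBall_zpow_add_one, ih, ← ENNReal.rpow_natCast, ← ENNReal.rpow_add _ _ hp0 hpt]
    congr 1
    push_cast
    ring
  | pred k ih =>
    rw [← ENNReal.mul_right_inj (pow_ne_zero n hp0) (ENNReal.pow_ne_top hpt),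
      ← μp_closedBall_zpow_add_one, sub_add_cancel, ih, ← ENNReal.rpow_natCast, ← ENNReal.rpow_add _ _ hp0 hpt]
    congr 1
    push_cast
    ring

theorem lintegral_rpow_le_morrey {q : ℝ} (l : ℝ) (hq : 0 < q)
    (f : (Fin n → ℚ_[p]) → ℝ) (γ : ℤ) :
    (∫⁻ y in closedBall 0 ((p : ℝ) ^ γ), ‖f y‖ₑ ^ q ∂μp p n) ^ (1 / q) ≤
      (p : ℝ≥0∞) ^ ((n : ℝ) * γ * ((1 + l * q) / q)) * morrey p n q l f := by
  have hp := (Fact.out : p.Prime).pos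
  have hp0 : (p : ℝ≥0∞) ≠ 0 := by exact_mod_cast hp.ne'
  have hpt : (p : ℝ≥0∞) ≠ ⊤ := ENNReal.natCast_ne_top p
  set I := ∫⁻ y in closedBall 0 ((p : ℝ) ^ γ), ‖f y‖ₑ ^ q ∂μp p n
  have hterm :
      ((p : ℝ≥0∞) ^ ((n : ℝ) * γ * -(1 + l * q)) * I) ^ (1 / q) ≤ morrey p n q l f := by
    refine le_iSup_of_le γ (le_of_eq ?_)
    rw [← Real.rpow_mul (by positivity), ENNReal.ofReal_natCast_rpow hp]
    have hball :
        closedBall (0 : Fin n → ℚ_[p]) ((p : ℝ) ^ γ) = {x | ‖x‖ ≤ (p : ℝ) ^ γ} :=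
      Set.ext fun _ => mem_closedBall_zero_iff
    simp only [I, hball, Real.enorm_eq_ofReal_abs,
      ENNReal.ofReal_rpow_of_nonneg (abs_nonneg _) hq.le]
  calc I ^ (1 / q)
    _ = (p : ℝ≥0∞) ^ ((n : ℝ) * γ * ((1 + l * q) / q)) *
        ((p : ℝ≥0∞) ^ ((n : ℝ) * γ * -(1 + l * q)) * I) ^ (1 / q) := by
      have hexp :
          (n : ℝ) * γ * ((1 + l * q) / q) + (n : ℝ) * γ * -(1 + l * q) * (1 / q) = 0 := by
        ring
      rw [ENNReal.mul_rpow_of_nonneg _ _ (by positivity), ← mul_assoc, ← ENNReal.rpow_mul,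
        ← ENNReal.rpow_add _ _ hp0 hpt, hexp, ENNReal.rpow_zero, one_mul]
    _ ≤ _ := by gcongr

theorem ofReal_abs_Hop_zero (f : (Fin n → ℚ_[p]) → ℝ) {x : Fin n → ℚ_[p]} {γ : ℤ}
    (hγ : ‖x‖ = (p : ℝ) ^ γ) :
    ENNReal.ofReal |Hop p n 0 f x| = (p : ℝ≥0∞) ^ (γ * -(n : ℝ)) *
      ‖∫ y in closedBall 0 ((p : ℝ) ^ γ), f y ∂μp p n‖ₑ := by
  have hball : {y | ‖y‖ ≤ ‖x‖} = closedBall (0 : Fin n → ℚ_[p]) ((p : ℝ) ^ γ) :=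
    Set.ext fun _ => by rw [hγ]; exact mem_closedBall_zero_iff.symm
  rw [Hop, abs_mul, ENNReal.ofReal_mul (abs_nonneg _), abs_of_nonneg (by positivity), hball, hγ,
    zero_sub, ENNReal.ofReal_natCast_zpow_rpow (Fact.out : p.Prime).pos,
    Real.enorm_eq_ofReal_abs]

end μp

theorem hardy_morrey_pointwise_general (p : ℕ) [Fact p.Prime] (n : ℕ)
    (q l : ℝ) (hq : 1 ≤ q)
    (f : (Fin n → ℚ_[p]) → ℝ) (hf : AEStronglyMeasurable f (μp p n))
    (x : Fin n → ℚ_[p]) (hx : x ≠ 0) :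
    ENNReal.ofReal |Hop p n 0 f x| ≤
      ENNReal.ofReal (‖x‖ ^ ((n : ℝ) * l)) * morrey p n q l f := by
  obtain ⟨γ, hγ⟩ := Padic.exists_pi_norm_eq_zpow hx
  have hp0 : (p : ℝ≥0∞) ≠ 0 := by exact_mod_cast (Fact.out : p.Prime).ne_zero
  have hpt : (p : ℝ≥0∞) ≠ ⊤ := ENNReal.natCast_ne_top p
  set B := closedBall (0 : Fin n → ℚ_[p]) ((p : ℝ) ^ γ)
  calc ENNReal.ofReal |Hop p n 0 f x|
    _ = (p : ℝ≥0∞) ^ (γ * -(n : ℝ)) * ‖∫ y in B, f y ∂μp p n‖ₑ :=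
      ofReal_abs_Hop_zero f hγ
    _ ≤ (p : ℝ≥0∞) ^ (γ * -(n : ℝ)) *
        ((∫⁻ y in B, ‖f y‖ₑ ^ q ∂μp p n) ^ (1 / q) * μp p n B ^ (1 - 1 / q)) := by
      gcongr
      exact enorm_setIntegral_le_lintegral_rpow_mul_measure hq hf.restrict
    _ ≤ (p : ℝ≥0∞) ^ (γ * -(n : ℝ)) *
        (((p : ℝ≥0∞) ^ ((n : ℝ) * γ * ((1 + l * q) / q)) * morrey p n q l f) *
          ((p : ℝ≥0∞) ^ ((n : ℝ) * γ)) ^ (1 - 1 / q)) := by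
      rw [μp_closedBall_zpow]
      gcongr
      exact lintegral_rpow_le_morrey l (by linarith) f γ
    _ = (p : ℝ≥0∞) ^ (γ * -(n : ℝ) + (n : ℝ) * γ * ((1 + l * q) / q) +
        (n : ℝ) * γ * (1 - 1 / q)) * morrey p n q l f := by
      rw [ENNReal.rpow_add _ _ hp0 hpt, ENNReal.rpow_add _ _ hp0 hpt, ← ENNReal.rpow_mul]
      ring
    _ = ENNReal.ofReal (‖x‖ ^ ((n : ℝ) * l)) * morrey p n q l f := by
      rw [hγ, ENNReal.ofReal_natCast_zpow_rpow (Fact.out : p.Prime).pos]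
      congr 2
      field_simp
      ring

/-- Pointwise Hölder bound for the `p`-adic Hardy operator on the central Morrey
space: `|H^p f(x)| ≤ |x|_p^{nλ} ‖f‖_{Ḃ^{q,λ}}` for `x ≠ 0`. -/
theorem hardy_morrey_pointwise (p : ℕ) [Fact p.Prime] (n : ℕ) (hn : 0 < n)
    (q l : ℝ) (hq : 1 ≤ q) (hl1 : -(1 / q) ≤ l) (hl2 : l < 0)
    (f : (Fin n → ℚ_[p]) → ℝ) (hf : AEStronglyMeasurable f (μp p n))
    (hfB : morrey p n q l f ≠ ⊤)
    (x : Fin n → ℚ_[p]) (hx : x ≠ 0) :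
    ENNReal.ofReal |Hop p n 0 f x| ≤
      ENNReal.ofReal (‖x‖ ^ ((n : ℝ) * l)) * morrey p n q l f :=
  hardy_morrey_pointwise_general p n q l hq f hf x hx
end
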